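/- The identity 1 - |w₁|² - (|w₂|² + |w₃|²)² = (1-|a|²)·(1 - |z₁|² - (|z₂|²+|z₃|²)²)/|1 - conj(a)z₁|² holds, where (w₁,w₂,w₃) = Φ_a(z₁,z₂,z₃) is the map from the Catlin-type example domain Ω*, for all z with |z₁| < 1. -/

import Mathlib

/-! The first coordinate of `Φ_a` is the disc automorphism `z₁ ↦ (z₁ - a)/(1 - ā z₁)`, which
multiplies `1 - |z₁|²` by `(1 - |a|²)/|1 - ā z₁|²`. The weights `(1-|a|²)^{1/4}` and
`(1 - ā z₁)^{-1/2}` on `z₂, z₃` are chosen so that `(|w₂|² + |w₃|²)²` picks up exactly the same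
factor, hence the defining function of `Ω*` transforms by it as a whole. -/

open Complex

/-- The automorphism `Φ_a` of the Catlin-type domain `Ω*`, using the principal branch of
the square root (valid since `Re(1 - conj(a) z₁) > 0` for `|z₁| < 1`). -/
noncomputable def PhiStar (a : ℂ) (z : ℂ × ℂ × ℂ) : ℂ × ℂ × ℂ :=
  ((z.1 - a) / (1 - (starRingEnd ℂ) a * z.1),
   (((1 - ‖a‖^2) ^ ((1:ℝ)/4) : ℝ) : ℂ) * z.2.1 / (1 - (starRingEnd ℂ) a * z.1) ^ ((1:ℂ)/2),
   (((1 - ‖a‖^2) ^ ((1:ℝ)/4) : ℝ) : ℂ) * z.2.2 / (1 - (starRingEnd ℂ) a * z.1) ^ ((1:ℂ)/2))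

theorem norm_one_sub_conj_mul_sq_sub_norm_sub_sq (a z : ℂ) :
    ‖1 - (starRingEnd ℂ) a * z‖ ^ 2 - ‖z - a‖ ^ 2 = (1 - ‖a‖ ^ 2) * (1 - ‖z‖ ^ 2) := by
  simp only [← normSq_eq_norm_sq, normSq_apply, sub_re, sub_im, mul_re, mul_im, one_re, one_im,
    conj_re, conj_im]
  ring

theorem one_sub_conj_mul_ne_zero {a z : ℂ} (h : ‖a‖ * ‖z‖ < 1) :
    1 - (starRingEnd ℂ) a * z ≠ 0 := by
  rw [sub_ne_zero]
  intro h1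
  have h2 : ‖(starRingEnd ℂ) a * z‖ < 1 := by rwa [norm_mul, RCLike.norm_conj]
  rw [← h1, norm_one] at h2
  exact h2.false

theorem norm_cpow_half_sq (d : ℂ) : ‖d ^ ((1 : ℂ) / 2)‖ ^ 2 = ‖d‖ := by
  rw [show (1 : ℂ) / 2 = ((1 / 2 : ℝ) : ℂ) by norm_num, norm_cpow_real, ← Real.sqrt_eq_rpow,
    Real.sq_sqrt (norm_nonneg d)]

theorem Real.rpow_quarter_sq {x : ℝ} (hx : 0 ≤ x) : (x ^ ((1 : ℝ) / 4)) ^ 2 = √x := by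
  rw [← Real.rpow_natCast, ← Real.rpow_mul hx, Real.sqrt_eq_rpow]
  norm_num

theorem norm_rpow_quarter_mul_div_cpow_half_sq {x : ℝ} (hx : 0 ≤ x) (w d : ℂ) :
    ‖((x ^ ((1 : ℝ) / 4) : ℝ) : ℂ) * w / d ^ ((1 : ℂ) / 2)‖ ^ 2 = √x * ‖w‖ ^ 2 / ‖d‖ := by
  rw [norm_div, div_pow, norm_mul, mul_pow, norm_cpow_half_sq, norm_real, Real.norm_eq_abs,
    sq_abs, Real.rpow_quarter_sq hx]

/-- The identity
`1 - |w₁|² - (|w₂|² + |w₃|²)² = (1-|a|²)(1 - |z₁|² - (|z₂|²+|z₃|²)²) / |1 - conj(a)z₁|²`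
for `w = Φ_a(z)`, valid when `‖a‖ < 1` and `‖z₁‖ < 1`. -/
theorem PhiStar_defining_identity (a : ℂ) (ha : ‖a‖ < 1) (z : ℂ × ℂ × ℂ)
    (hz : ‖z.1‖ < 1) :
    1 - ‖(PhiStar a z).1‖^2 - (‖(PhiStar a z).2.1‖^2 + ‖(PhiStar a z).2.2‖^2)^2 =
      (1 - ‖a‖^2) * (1 - ‖z.1‖^2 - (‖z.2.1‖^2 + ‖z.2.2‖^2)^2) /
        ‖1 - (starRingEnd ℂ) a * z.1‖^2 := by
  have hA : 0 ≤ 1 - ‖a‖ ^ 2 := by nlinarith [norm_nonneg a]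
  have hd : 1 - (starRingEnd ℂ) a * z.1 ≠ 0 :=
    one_sub_conj_mul_ne_zero (mul_lt_one_of_nonneg_of_lt_one_left (norm_nonneg a) ha hz.le)
  dsimp only [PhiStar]
  rw [norm_rpow_quarter_mul_div_cpow_half_sq hA, norm_rpow_quarter_mul_div_cpow_half_sq hA,
    norm_div, div_pow, ← add_div, ← mul_add, div_pow, mul_pow, Real.sq_sqrt hA]
  rw [sub_sub, ← add_div, one_sub_div (pow_ne_zero 2 (norm_ne_zero_iff.mpr hd))]
  congr 1
  linear_combination norm_one_sub_conj_mul_sq_sub_norm_sub_sq a z.1
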